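/- arXiv:hep-th/9910253 — 2 statements merged into one kernel-verified Lean document; each statement's English description precedes it below -/
import Mathlib

section
/- If R(u,v) is unitary, i.e., R^{αβ}_{γδ}(u,v) R^{δγ}_{α'β'}(v,u) = δ^α_{β'} δ^β_{α'}, and compatible with the grading, then the fermionic R-operator satisfies R^f_{jk}(u,v) R^f_{kj}(v,u) = Id. -/
open Matrix BigOperators

abbrev Conf (L N : ℕ) := Fin L → Fin N

noncomputable def E {L N : ℕ} (p : Fin N → ℕ) (j : Fin L) (α β : Fin N) :
    Matrix (Conf L N) (Conf L N) ℂ := Matrix.of fun x y =>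
  if x j = α ∧ y j = β ∧ ∀ k, k ≠ j → x k = y k then
    (-1 : ℂ) ^ ((p α + p β) * ∑ k ∈ Finset.univ.filter (fun k => j < k), p (x k))
  else 0

noncomputable def P {L N : ℕ} (p : Fin N → ℕ) (j k : Fin L) :
    Matrix (Conf L N) (Conf L N) ℂ :=
  ∑ α, ∑ β, ((-1 : ℂ) ^ p β) • (E p j α β * E p k β α)

noncomputable def Rf {L N : ℕ} (p : Fin N → ℕ)
    (R : Fin N → Fin N → Fin N → Fin N → ℂ) (j k : Fin L) :
    Matrix (Conf L N) (Conf L N) ℂ :=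
  ∑ α, ∑ β, ∑ γ, ∑ δ,
    ((-1 : ℂ) ^ (p γ + p α * (p β + p γ)) * R α β γ δ) • (E p j α γ * E p k β δ)


def Sf {L N : ℕ} (p : Fin N → ℕ) (j : Fin L) (x : Conf L N) : ℕ :=
  ∑ l ∈ Finset.univ.filter (fun l => j < l), p (x l)

lemma E_mul_apply {L N : ℕ} (p : Fin N → ℕ) {j k : Fin L} (hjk : j ≠ k)
    (α β γ δ : Fin N) (x y : Conf L N) :
    (E p j α γ * E p k β δ) x y =
    if x j = α ∧ x k = β ∧ y j = γ ∧ y k = δ ∧ ∀ l, l ≠ j → l ≠ k → x l = y l then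
      (-1 : ℂ) ^ ((p α + p γ) * Sf p j x + (p β + p δ) * Sf p k (Function.update x j γ))
    else 0 := by
  rw [Matrix.mul_apply]
  rw [Finset.sum_eq_single (Function.update x j γ)]
  · by_cases h : x j = α ∧ x k = β ∧ y j = γ ∧ y k = δ ∧ ∀ l, l ≠ j → l ≠ k → x l = y l
    · obtain ⟨h1, h2, h3, h4, h5⟩ := h
      rw [if_pos ⟨h1, h2, h3, h4, h5⟩]
      have e1 : E p j α γ x (Function.update x j γ) = (-1 : ℂ) ^ ((p α + p γ) * Sf p j x) := by
        rw [E, of_apply, if_pos, Sf]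
        exact ⟨h1, Function.update_self j γ x, fun l hl => (Function.update_of_ne hl γ x).symm⟩
      have e2 : E p k β δ (Function.update x j γ) y =
          (-1 : ℂ) ^ ((p β + p δ) * Sf p k (Function.update x j γ)) := by
        rw [E, of_apply, if_pos, Sf]
        refine ⟨?_, h4, fun l hl => ?_⟩
        · rw [Function.update_of_ne (Ne.symm hjk)]; exact h2
        · by_cases hlj : l = j
          · subst hlj; rw [Function.update_self]; exact h3.symm
          · rw [Function.update_of_ne hlj]; exact h5 l hlj hl
      rw [e1, e2, ← pow_add]
    · rw [if_neg h]
      rw [E, E, of_apply, of_apply]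
      by_cases c1 : x j = α ∧ Function.update x j γ j = γ ∧ ∀ l, l ≠ j → x l = Function.update x j γ l
      · by_cases c2 : Function.update x j γ k = β ∧ y k = δ ∧ ∀ l, l ≠ k → Function.update x j γ l = y l
        · exfalso
          apply h
          refine ⟨c1.1, ?_, ?_, c2.2.1, fun l hlj hlk => ?_⟩
          · rw [← c2.1, Function.update_of_ne (Ne.symm hjk)]
          · rw [← c2.2.2 j hjk, Function.update_self]
          · rw [← c2.2.2 l hlk, Function.update_of_ne hlj]
        · rw [if_neg c2, mul_zero]
      · rw [if_neg c1, zero_mul]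
  · intro z _ hz
    rw [E, of_apply]
    by_cases c1 : x j = α ∧ z j = γ ∧ ∀ l, l ≠ j → x l = z l
    · exfalso
      apply hz
      funext l
      by_cases hlj : l = j
      · subst hlj; rw [Function.update_self]; exact c1.2.1
      · rw [Function.update_of_ne hlj]; exact (c1.2.2 l hlj).symm
    · rw [if_neg c1, zero_mul]
  · intro habs; exact absurd (Finset.mem_univ _) habs

lemma Rf_apply {L N : ℕ} (p : Fin N → ℕ) (R : Fin N → Fin N → Fin N → Fin N → ℂ)
    {j k : Fin L} (hjk : j ≠ k) (x y : Conf L N) :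
    Rf p R j k x y =
    if ∀ l, l ≠ j → l ≠ k → x l = y l then
      (-1 : ℂ) ^ (p (y j) + p (x j) * (p (x k) + p (y j))
        + ((p (x j) + p (y j)) * Sf p j x
          + (p (x k) + p (y k)) * Sf p k (Function.update x j (y j))))
        * R (x j) (x k) (y j) (y k)
    else 0 := by
  have hE := fun (α β γ δ : Fin N) => E_mul_apply p hjk α β γ δ x y
  rw [Rf]
  simp only [Matrix.sum_apply, Matrix.smul_apply, smul_eq_mul]
  refine (Fintype.sum_eq_single (x j) ?_).trans ((Fintype.sum_eq_single (x k) ?_).trans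
    ((Fintype.sum_eq_single (y j) ?_).trans ((Fintype.sum_eq_single (y k) ?_).trans ?_)))
  · intro α hα
    refine Finset.sum_eq_zero fun β _ => Finset.sum_eq_zero fun γ _ => Finset.sum_eq_zero fun δ _ => ?_
    rw [hE α β γ δ, if_neg, mul_zero]
    rintro ⟨rfl, -, -, -, -⟩; exact hα rfl
  · intro β hβ
    refine Finset.sum_eq_zero fun γ _ => Finset.sum_eq_zero fun δ _ => ?_
    rw [hE _ β _ _, if_neg, mul_zero]
    rintro ⟨-, rfl, -, -, -⟩; exact hβ rfl
  · intro γ hγ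
    refine Finset.sum_eq_zero fun δ _ => ?_
    rw [hE _ _ γ _, if_neg, mul_zero]
    rintro ⟨-, -, rfl, -, -⟩; exact hγ rfl
  · intro δ hδ
    rw [hE _ _ _ δ, if_neg, mul_zero]
    rintro ⟨-, -, -, rfl, -⟩; exact hδ rfl
  · rw [hE (x j) (x k) (y j) (y k)]
    simp only [true_and, and_true, eq_self_iff_true]
    split_ifs with h
    · rw [pow_add]; ring
    · rw [mul_zero]

lemma neg_one_pow_congr' {m n : ℕ} (h : ((m : ℕ) : ZMod 2) = ((n : ℕ) : ZMod 2)) :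
    (-1 : ℂ) ^ m = (-1) ^ n := by
  have e : ∀ r : ℕ, (-1 : ℂ) ^ r = (-1) ^ (r % 2) := fun r => by
    conv_lhs => rw [← Nat.div_add_mod r 2]
    rw [pow_add, pow_mul, neg_one_sq, one_pow, one_mul]
  have h2 : m % 2 = n % 2 := (ZMod.natCast_eq_natCast_iff m n 2).mp h
  rw [e m, e n, h2]

lemma neg_one_pow_eq_one {m : ℕ} (h : ((m : ℕ) : ZMod 2) = 0) : (-1 : ℂ) ^ m = 1 := by
  have : ((m : ℕ) : ZMod 2) = ((0 : ℕ) : ZMod 2) := by simpa using h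
  rw [neg_one_pow_congr' this, pow_zero]

lemma Sf_congr {L N : ℕ} (p : Fin N → ℕ) (j : Fin L) {x z : Conf L N}
    (h : ∀ l, j < l → x l = z l) : Sf p j x = Sf p j z :=
  Finset.sum_congr rfl fun l hl => by rw [h l (Finset.mem_filter.mp hl).2]

lemma Sf_erase_add {L N : ℕ} (p : Fin N → ℕ) {j m : Fin L} (h : j < m) (x : Conf L N) :
    Sf p j x = p (x m) + ∑ l ∈ (Finset.univ.filter fun l => j < l).erase m, p (x l) :=
  (Finset.add_sum_erase _ _ (by simp [h])).symm

lemma zmod_key1 : ∀ A B C D Ee F T U : ZMod 2, A + B + C + D = 0 → D + C + Ee + F = 0 →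
    (C + A * (B + C) + ((A + C) * (B + T) + (B + D) * U)) +
      (Ee + D * (C + Ee) + ((D + Ee) * U + (C + F) * (Ee + T))) = (B + Ee) * (T + U) := by
  decide

lemma zmod_key2 : ∀ A B C D Ee F T U : ZMod 2, A + B + C + D = 0 → D + C + Ee + F = 0 →
    (C + A * (B + C) + ((A + C) * T + (B + D) * (C + U))) +
      (Ee + D * (C + Ee) + ((D + Ee) * (C + U) + (C + F) * T)) =
    (B + Ee) * (T + U) + (A * B + F * (1 + A + B)) := by
  decide

lemma zmod_zero1 : ∀ B T U : ZMod 2, (B + B) * (T + U) = 0 := by decide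

lemma zmod_zero2 : ∀ A B T U : ZMod 2,
    (B + B) * (T + U) + (A * B + A * (1 + A + B)) = 0 := by decide

def iota {L N : ℕ} (x : Conf L N) (j k : Fin L) (q : Fin N × Fin N) : Conf L N :=
  Function.update (Function.update x j q.1) k q.2

/-- If the `R`-matrix is unitary, i.e. for `R1 = R(u,v)`, `R2 = R(v,u)` one has
`Σ_{γδ} R1^{αβ}_{γδ} R2^{δγ}_{α'β'} = δ^α_{β'} δ^β_{α'}`, and both matrices are
compatible with the grading, then the fermionic `R`-operator is unitary:
`R^f_{jk}(u,v) R^f_{kj}(v,u) = Id`. -/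
theorem fermionic_R_unitary {L N : ℕ} (p : Fin N → ℕ)
    (R1 R2 : Fin N → Fin N → Fin N → Fin N → ℂ)
    (hcomp1 : ∀ α β γ δ, ((p α + p β + p γ + p δ : ℕ) : ZMod 2) ≠ 0 →
      R1 α β γ δ = 0)
    (hcomp2 : ∀ α β γ δ, ((p α + p β + p γ + p δ : ℕ) : ZMod 2) ≠ 0 →
      R2 α β γ δ = 0)
    (huni : ∀ α β α' β', (∑ γ, ∑ δ, R1 α β γ δ * R2 δ γ α' β') =
      if α = β' ∧ β = α' then 1 else 0)
    (j k : Fin L) (hjk : j ≠ k) :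
    Rf p R1 j k * Rf p R2 k j = 1 := by
  ext x y
  rw [Matrix.mul_apply]
  by_cases h : ∀ l, l ≠ j → l ≠ k → x l = y l
  · -- x and y agree away from j, k
    have hιj : ∀ γ δ : Fin N, iota x j k (γ, δ) j = γ := fun γ δ => by
      show Function.update (Function.update x j γ) k δ j = γ
      rw [Function.update_of_ne hjk, Function.update_self]
    have hιk : ∀ γ δ : Fin N, iota x j k (γ, δ) k = δ := fun γ δ => by
      show Function.update (Function.update x j γ) k δ k = δ
      rw [Function.update_self]
    have hιl : ∀ (γ δ : Fin N) l, l ≠ j → l ≠ k → iota x j k (γ, δ) l = x l :=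
      fun γ δ l hlj hlk => by
        show Function.update (Function.update x j γ) k δ l = x l
        rw [Function.update_of_ne hlk, Function.update_of_ne hlj]
    have hinj : ∀ q ∈ Finset.univ, ∀ r ∈ Finset.univ,
        iota x j k q = iota x j k r → q = r := by
      rintro ⟨γ, δ⟩ - ⟨γ', δ'⟩ - hqr
      have h1 := congrFun hqr j
      have h2 := congrFun hqr k
      rw [hιj, hιj] at h1
      rw [hιk, hιk] at h2
      simp [h1, h2]
    have hvan : ∀ w ∈ Finset.univ, w ∉ Finset.image (iota x j k) Finset.univ →
        Rf p R1 j k x w * Rf p R2 k j w y = 0 := by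
      intro w _ hw
      rw [Rf_apply p R1 hjk, if_neg, zero_mul]
      intro h1
      apply hw
      refine Finset.mem_image.2 ⟨(w j, w k), Finset.mem_univ _, ?_⟩
      funext l
      by_cases hlk : l = k
      · subst hlk; exact hιk _ _
      by_cases hlj : l = j
      · subst hlj; exact hιj _ _
      · rw [hιl _ _ l hlj hlk]; exact h1 l hlj hlk
    rw [← Finset.sum_subset (Finset.subset_univ (Finset.image (iota x j k) Finset.univ)) hvan]
    rw [Finset.sum_image hinj]
    -- key per-term computation
    have main : ∃ K : ℕ,
        ((x j = y j → x k = y k → ((K : ℕ) : ZMod 2) = 0)) ∧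
        ∀ γ δ : Fin N, Rf p R1 j k x (iota x j k (γ, δ)) * Rf p R2 k j (iota x j k (γ, δ)) y =
          (-1 : ℂ) ^ K * (R1 (x j) (x k) γ δ * R2 δ γ (y k) (y j)) := by
      rcases hjk.lt_or_gt with hlt | hlt
      · -- j < k
        set T : ℕ := ∑ l ∈ (Finset.univ.filter fun l => j < l).erase k, p (x l) with hT
        refine ⟨(p (x k) + p (y k)) * (T + Sf p k x), ?_, ?_⟩
        · intro _ hxk
          rw [hxk]
          push_cast
          exact zmod_zero1 _ _ _
        · intro γ δ
          have hSf1 : Sf p j x = p (x k) + T := Sf_erase_add p hlt x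
          have hSf2 : Sf p k (Function.update x j γ) = Sf p k x :=
            Sf_congr p k fun l hl => Function.update_of_ne (hlt.trans hl).ne' _ _
          have hSf3 : Sf p k (iota x j k (γ, δ)) = Sf p k x :=
            Sf_congr p k fun l hl => hιl γ δ l (hlt.trans hl).ne' hl.ne'
          have hSf4 : Sf p j (Function.update (iota x j k (γ, δ)) k (y k)) = p (y k) + T := by
            rw [Sf_erase_add p hlt]
            congr 1
            · rw [Function.update_self]
            · rw [hT]
              refine Finset.sum_congr rfl fun l hl => ?_
              obtain ⟨hlk, hl2⟩ := Finset.mem_erase.mp hl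
              have hlj : l ≠ j := ((Finset.mem_filter.mp hl2).2).ne'
              rw [Function.update_of_ne hlk, hιl γ δ l hlj hlk]
          rw [Rf_apply p R1 hjk, Rf_apply p R2 hjk.symm]
          rw [if_pos (fun l hlj hlk => (hιl γ δ l hlj hlk).symm),
            if_pos (fun l hlk hlj => (hιl γ δ l hlj hlk).trans (h l hlj hlk))]
          rw [hιj, hιk, hSf1, hSf2, hSf3, hSf4]
          by_cases hR1 : R1 (x j) (x k) γ δ = 0
          · simp [hR1]
          by_cases hR2 : R2 δ γ (y k) (y j) = 0
          · simp [hR2]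
          have hc1' : ((p (x j) : ZMod 2)) + (p (x k)) + (p γ) + (p δ) = 0 := by
            by_contra hc
            exact hR1 (hcomp1 _ _ _ _ (fun h0 => hc (by push_cast at h0; linear_combination h0)))
          have hc2' : ((p δ : ZMod 2)) + (p γ) + (p (y k)) + (p (y j)) = 0 := by
            by_contra hc
            exact hR2 (hcomp2 _ _ _ _ (fun h0 => hc (by push_cast at h0; linear_combination h0)))
          rw [mul_mul_mul_comm, ← pow_add]
          congr 1
          apply neg_one_pow_congr'
          push_cast
          linear_combination zmod_key1 ((p (x j) : ZMod 2)) ((p (x k) : ZMod 2))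
            ((p γ : ZMod 2)) ((p δ : ZMod 2)) ((p (y k) : ZMod 2)) ((p (y j) : ZMod 2))
            ((T : ZMod 2)) ((Sf p k x : ZMod 2)) hc1' hc2'
      · -- k < j
        set U : ℕ := ∑ l ∈ (Finset.univ.filter fun l => k < l).erase j, p (x l) with hU
        refine ⟨(p (x k) + p (y k)) * (Sf p j x + U)
          + (p (x j) * p (x k) + p (y j) * (1 + p (x j) + p (x k))), ?_, ?_⟩
        · intro hxj hxk
          rw [hxj, hxk]
          push_cast
          exact zmod_zero2 _ _ _ _
        · intro γ δ
          have hSf2 : Sf p k (Function.update x j γ) = p γ + U := by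
            rw [Sf_erase_add p hlt]
            congr 1
            · rw [Function.update_self]
            · rw [hU]
              refine Finset.sum_congr rfl fun l hl => ?_
              rw [Function.update_of_ne (Finset.mem_erase.mp hl).1]
          have hSf3 : Sf p k (iota x j k (γ, δ)) = p γ + U := by
            rw [Sf_erase_add p hlt]
            congr 1
            · rw [hιj]
            · rw [hU]
              refine Finset.sum_congr rfl fun l hl => ?_
              obtain ⟨hlj, hl2⟩ := Finset.mem_erase.mp hl
              have hlk : l ≠ k := ((Finset.mem_filter.mp hl2).2).ne'
              rw [hιl γ δ l hlj hlk]
          have hSf4 : Sf p j (Function.update (iota x j k (γ, δ)) k (y k)) = Sf p j x :=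
            Sf_congr p j fun l hl => by
              rw [Function.update_of_ne (hlt.trans hl).ne', hιl γ δ l hl.ne' (hlt.trans hl).ne']
          rw [Rf_apply p R1 hjk, Rf_apply p R2 hjk.symm]
          rw [if_pos (fun l hlj hlk => (hιl γ δ l hlj hlk).symm),
            if_pos (fun l hlk hlj => (hιl γ δ l hlj hlk).trans (h l hlj hlk))]
          rw [hιj, hιk, hSf2, hSf3, hSf4]
          by_cases hR1 : R1 (x j) (x k) γ δ = 0
          · simp [hR1]
          by_cases hR2 : R2 δ γ (y k) (y j) = 0
          · simp [hR2]
          have hc1' : ((p (x j) : ZMod 2)) + (p (x k)) + (p γ) + (p δ) = 0 := by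
            by_contra hc
            exact hR1 (hcomp1 _ _ _ _ (fun h0 => hc (by push_cast at h0; linear_combination h0)))
          have hc2' : ((p δ : ZMod 2)) + (p γ) + (p (y k)) + (p (y j)) = 0 := by
            by_contra hc
            exact hR2 (hcomp2 _ _ _ _ (fun h0 => hc (by push_cast at h0; linear_combination h0)))
          rw [mul_mul_mul_comm, ← pow_add]
          congr 1
          apply neg_one_pow_congr'
          push_cast
          linear_combination zmod_key2 ((p (x j) : ZMod 2)) ((p (x k) : ZMod 2))
            ((p γ : ZMod 2)) ((p δ : ZMod 2)) ((p (y k) : ZMod 2)) ((p (y j) : ZMod 2))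
            ((Sf p j x : ZMod 2)) ((U : ZMod 2)) hc1' hc2'
    obtain ⟨K, hK0, hterm⟩ := main
    rw [Fintype.sum_prod_type]
    simp only [hterm]
    simp only [← Finset.mul_sum]
    rw [huni (x j) (x k) (y k) (y j)]
    by_cases hxy : x j = y j ∧ x k = y k
    · have hxy' : x = y := funext fun l => by
        by_cases hlj : l = j
        · subst hlj; exact hxy.1
        by_cases hlk : l = k
        · subst hlk; exact hxy.2
        · exact h l hlj hlk
      rw [if_pos hxy, mul_one]
      have h1 : (1 : Matrix (Conf L N) (Conf L N) ℂ) x y = 1 := by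
        rw [hxy']; exact Matrix.one_apply_eq y
      rw [h1]
      exact neg_one_pow_eq_one (hK0 hxy.1 hxy.2)
    · rw [if_neg hxy, mul_zero]
      have hne : x ≠ y := fun e => hxy ⟨by rw [e], by rw [e]⟩
      rw [Matrix.one_apply_ne hne]
  · -- x and y differ away from j, k
    have hz : ∀ w : Conf L N, Rf p R1 j k x w * Rf p R2 k j w y = 0 := by
      intro w
      rw [Rf_apply p R1 hjk, Rf_apply p R2 hjk.symm]
      by_cases h1 : ∀ l, l ≠ j → l ≠ k → x l = w l
      · rw [if_pos h1]
        rw [if_neg, mul_zero]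
        intro h2
        exact h fun l hlj hlk => (h1 l hlj hlk).trans (h2 l hlk hlj)
      · rw [if_neg h1, zero_mul]
    rw [Finset.sum_eq_zero fun w _ => hz w]
    have hne : x ≠ y := by rintro rfl; exact h fun l _ _ => rfl
    rw [Matrix.one_apply_ne hne]
end

section
/- The fermionic R-operator intertwines products of graded L-matrices: R^f_{jk}(ξ_j, ξ_k) L_k(u, ξ_k) L_j(u, ξ_j) = L_j(u, ξ_j) L_k(u, ξ_k) R^f_{jk}(ξ_j, ξ_k), where both sides are (m+n)×(m+n) matrices of operators in auxiliary space, assuming R satisfies the Yang-Baxter equation and the grading compatibility condition. -/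
open Matrix BigOperators

noncomputable def Lmat {L N : ℕ} (p : Fin N → ℕ)
    (Rm : ℂ → ℂ → Fin N → Fin N → Fin N → Fin N → ℂ) (j : Fin L) (u v : ℂ) :
    Matrix (Fin N) (Fin N) (Matrix (Conf L N) (Conf L N) ℂ) :=
  Matrix.of fun α β => ∑ γ, ∑ δ, ((-1 : ℂ) ^ (p α * p γ) * Rm u v α γ β δ) • E p j γ δ



lemma neg_one_pow_congr_zmod (a b : ℕ) (h : (a : ZMod 2) = (b : ZMod 2)) : (-1:ℂ)^a = (-1)^b := by
  rw [neg_one_pow_eq_pow_mod_two a, neg_one_pow_eq_pow_mod_two b]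
  rw [ZMod.natCast_eq_natCast_iff, Nat.ModEq] at h
  rw [h]

lemma two_zmod : (2 : ZMod 2) = 0 := rfl

lemma zhelp1 (A B C D Sj Sk : ZMod 2) :
    (A+B)*Sj + (C+D)*Sk = (A+B)*(C+D) + ((C+D)*Sk + (A+B)*(Sj + D + C)) := by
  revert A B C D Sj Sk; decide

lemma zhelp2 (A B C D Sj Sk : ZMod 2) :
    (A+B)*Sj + (C+D)*(Sk + B + A) = (A+B)*(C+D) + ((C+D)*Sk + (A+B)*Sj) := by
  revert A B C D Sj Sk; decide

lemma zkeyL (al be A B H F ga g e : ZMod 2) (c1 : ga + g + be + H = 0)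
    (c2 : al + e + ga + F = 0) (c3 : A + B + g + e = 0) :
    ga*g + al*e + (g + A*(B+g)) + (B+F)*(g+H)
      = al*A + al*B + A*B + H*B + H*F := by
  revert al be A B H F ga g e; decide

lemma zkeyR (al be A B H F g1 g2 g3 : ZMod 2) (c1 : g2 + g3 + H + F = 0)
    (c2 : g1 + B + be + g3 = 0) (c3 : al + A + g1 + g2 = 0) :
    (H + g2*(g3+H)) + g1*B + al*A + (B+g3)*(g2+H)
      = al*A + al*B + A*B + H*B + H*F := by
  revert al be A B H F g1 g2 g3; decide

section
variable {L N : ℕ} (p : Fin N → ℕ)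

/-- the sign-counting sum -/
def Sg (j : Fin L) (x : Conf L N) : ℕ := ∑ k ∈ Finset.univ.filter (fun k => j < k), p (x k)

lemma E_apply (j : Fin L) (a b : Fin N) (x y : Conf L N) :
    E p j a b x y = if x j = a ∧ y = Function.update x j b then
      (-1 : ℂ) ^ ((p a + p b) * Sg p j x) else 0 := by
  have h : (y j = b ∧ ∀ k, k ≠ j → x k = y k) ↔ y = Function.update x j b := by
    constructor
    · rintro ⟨h1, h2⟩
      funext l
      by_cases hl : l = j
      · subst hl; simpa using h1
      · rw [Function.update_of_ne hl]; exact (h2 l hl).symm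
    · rintro rfl
      exact ⟨Function.update_self _ _ _, fun l hl => (Function.update_of_ne hl _ _).symm⟩
  rw [E, Matrix.of_apply]
  exact if_congr (and_congr_right fun _ => h) rfl rfl

lemma Sg_update_ne (j m : Fin L) (hjm : ¬ j < m) (x : Conf L N) (b : Fin N) :
    Sg p j (Function.update x m b) = Sg p j x := by
  refine Finset.sum_congr rfl fun l hl => ?_
  rw [Function.update_of_ne]
  rintro rfl
  exact hjm (Finset.mem_filter.mp hl).2

lemma Sg_update_lt (j m : Fin L) (hjm : j < m) (x : Conf L N) (b : Fin N) :
    (Sg p j (Function.update x m b) : ZMod 2) = Sg p j x + p b + p (x m) := by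
  have hm : m ∈ Finset.univ.filter (fun k => j < k) := by simp [hjm]
  rw [Sg, Sg, ← Finset.add_sum_erase _ _ hm, ← Finset.add_sum_erase _ _ hm]
  have h : ∑ l ∈ (Finset.univ.filter (fun k => j < k)).erase m, p (Function.update x m b l)
      = ∑ l ∈ (Finset.univ.filter (fun k => j < k)).erase m, p (x l) := by
    refine Finset.sum_congr rfl fun l hl => ?_
    rw [Function.update_of_ne (Finset.ne_of_mem_erase hl)]
  rw [h, Function.update_self]
  push_cast
  linear_combination (-(p (x m) : ZMod 2)) * two_zmod

lemma E_mul_same (j : Fin L) (a b c d : Fin N) :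
    E p j a b * E p j c d = if b = c then E p j a d else 0 := by
  ext x y
  rw [Matrix.mul_apply, Finset.sum_eq_single (Function.update x j b)]
  · by_cases hbc : b = c
    · subst hbc
      rw [if_pos rfl, E_apply p j a b, E_apply p j b d, E_apply p j a d,
        Function.update_idem, Sg_update_ne p j j (lt_irrefl j)]
      by_cases hxa : x j = a
      · by_cases hy : y = Function.update x j d
        · rw [if_pos ⟨hxa, rfl⟩, if_pos ⟨Function.update_self _ _ _, hy⟩, if_pos ⟨hxa, hy⟩,
            ← pow_add]
          apply neg_one_pow_congr_zmod; push_cast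
          linear_combination ((p b : ZMod 2) * (Sg p j x : ZMod 2)) * two_zmod
        · rw [if_pos ⟨hxa, rfl⟩, if_neg (fun hc => hy hc.2), mul_zero, if_neg (fun hc => hy hc.2)]
      · rw [if_neg (fun hc => hxa hc.1), zero_mul, if_neg (fun hc => hxa hc.1)]
    · rw [if_neg hbc, E_apply p j c d, if_neg, mul_zero, Matrix.zero_apply]
      rintro ⟨h1, -⟩
      rw [Function.update_self] at h1
      exact hbc h1
  · intro z _ hz
    rw [E_apply, if_neg, zero_mul]
    rintro ⟨-, rfl⟩; exact hz rfl
  · intro h; exact absurd (Finset.mem_univ _) h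

lemma E_mul_comm (j k : Fin L) (hjk : j ≠ k) (a b c d : Fin N) :
    E p j a b * E p k c d
      = ((-1:ℂ)^((p a + p b) * (p c + p d))) • (E p k c d * E p j a b) := by
  ext x y
  rw [Matrix.smul_apply, Matrix.mul_apply, Matrix.mul_apply]
  rw [Finset.sum_eq_single (Function.update x j b)]
  rotate_left
  · intro z _ hz
    rw [E_apply, if_neg, zero_mul]
    rintro ⟨-, rfl⟩; exact hz rfl
  · intro h; exact absurd (Finset.mem_univ _) h
  rw [Finset.sum_eq_single (Function.update x k d)]
  rotate_left
  · intro z _ hz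
    rw [E_apply, if_neg, zero_mul]
    rintro ⟨-, rfl⟩; exact hz rfl
  · intro h; exact absurd (Finset.mem_univ _) h
  rw [E_apply p j a b x, E_apply p k c d _ y, E_apply p k c d x, E_apply p j a b _ y,
    Function.update_of_ne (Ne.symm hjk), Function.update_of_ne hjk,
    Function.update_comm hjk]
  simp only [eq_self_iff_true, and_true, true_and]
  by_cases hxa : x j = a
  · by_cases hxc : x k = c
    · by_cases hy : y = Function.update (Function.update x k d) j b
      · rw [if_pos hxa, if_pos ⟨hxc, hy⟩, if_pos hxc, if_pos ⟨hxa, hy⟩,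
          ← pow_add, smul_eq_mul, ← pow_add, ← pow_add]
        apply neg_one_pow_congr_zmod
        push_cast
        rcases hjk.lt_or_gt with h | h
        · rw [Sg_update_ne p k j (asymm h), Sg_update_lt p j k h, hxc]
          exact zhelp1 _ _ _ _ _ _
        · rw [Sg_update_lt p k j h, Sg_update_ne p j k (asymm h), hxa]
          exact zhelp2 _ _ _ _ _ _
      · simp [hy]
    · simp [hxc]
  · simp [hxa]

lemma prod_EE (j k : Fin L) (hjk : j ≠ k) (a b c d e f g h : Fin N) :
    (E p j a c * E p k b d) * (E p k e f * E p j g h)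
      = (if d = e then (if c = g then ((-1:ℂ)^((p b + p f) * (p g + p h))) else 0) else 0)
          • (E p j a h * E p k b f) := by
  by_cases hde : d = e
  · subst hde
    by_cases hcg : c = g
    · subst hcg
      rw [if_pos rfl, if_pos rfl]
      calc (E p j a c * E p k b d) * (E p k d f * E p j c h)
          = E p j a c * ((E p k b d * E p k d f) * E p j c h) := by
            rw [Matrix.mul_assoc, Matrix.mul_assoc]
        _ = E p j a c * (E p k b f * E p j c h) := by rw [E_mul_same, if_pos rfl]
        _ = E p j a c * (((-1:ℂ)^((p b + p f) * (p c + p h))) • (E p j c h * E p k b f)) := by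
            rw [E_mul_comm p k j (Ne.symm hjk)]
        _ = ((-1:ℂ)^((p b + p f) * (p c + p h))) • ((E p j a c * E p j c h) * E p k b f) := by
            rw [Matrix.mul_smul, Matrix.mul_assoc]
        _ = _ := by rw [E_mul_same, if_pos rfl]
    · rw [if_pos rfl, if_neg hcg, zero_smul]
      calc (E p j a c * E p k b d) * (E p k d f * E p j g h)
          = E p j a c * ((E p k b d * E p k d f) * E p j g h) := by
            rw [Matrix.mul_assoc, Matrix.mul_assoc]
        _ = E p j a c * (E p k b f * E p j g h) := by rw [E_mul_same, if_pos rfl]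
        _ = E p j a c * (((-1:ℂ)^((p b + p f) * (p g + p h))) • (E p j g h * E p k b f)) := by
            rw [E_mul_comm p k j (Ne.symm hjk)]
        _ = ((-1:ℂ)^((p b + p f) * (p g + p h))) • ((E p j a c * E p j g h) * E p k b f) := by
            rw [Matrix.mul_smul, Matrix.mul_assoc]
        _ = 0 := by rw [E_mul_same, if_neg hcg, Matrix.zero_mul, smul_zero]
  · rw [if_neg hde, zero_smul]
    calc (E p j a c * E p k b d) * (E p k e f * E p j g h)
        = E p j a c * ((E p k b d * E p k e f) * E p j g h) := by
          rw [Matrix.mul_assoc, Matrix.mul_assoc]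
      _ = 0 := by rw [E_mul_same, if_neg hde, Matrix.zero_mul, Matrix.mul_zero]

lemma prod_EE' (j k : Fin L) (hjk : j ≠ k) (a b c d e f g h : Fin N) :
    (E p j g h * E p k e f) * (E p j a c * E p k b d)
      = (if h = a then (if f = b then ((-1:ℂ)^((p e + p f) * (p a + p c))) else 0) else 0)
          • (E p j g c * E p k e d) := by
  calc (E p j g h * E p k e f) * (E p j a c * E p k b d)
      = E p j g h * ((E p k e f * E p j a c) * E p k b d) := by
        rw [Matrix.mul_assoc, Matrix.mul_assoc]
    _ = E p j g h * ((((-1:ℂ)^((p e + p f) * (p a + p c))) • (E p j a c * E p k e f)) * E p k b d) := by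
        rw [E_mul_comm p k j (Ne.symm hjk)]
    _ = ((-1:ℂ)^((p e + p f) * (p a + p c))) • ((E p j g h * E p j a c) * (E p k e f * E p k b d)) := by
        rw [Matrix.smul_mul, Matrix.mul_smul, Matrix.mul_assoc, Matrix.mul_assoc]
    _ = _ := by
        rw [E_mul_same, E_mul_same]
        by_cases hha : h = a
        · by_cases hfb : f = b
          · rw [if_pos hha, if_pos hfb, if_pos hha, if_pos hfb]
          · simp [hha, hfb]
        · simp [hha]
end

/-- The fermionic `R`-operator intertwines products of graded `L`-matrices:
`R^f_{jk}(ξ_j,ξ_k) L_k(u,ξ_k) L_j(u,ξ_j) = L_j(u,ξ_j) L_k(u,ξ_k) R^f_{jk}(ξ_j,ξ_k)`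
(an identity between `(m+n)×(m+n)` matrices of operators in auxiliary space,
stated here entrywise), provided `R` satisfies the Yang-Baxter equation and the
grading compatibility condition. -/
theorem fermionic_R_intertwines_L {L N : ℕ} (p : Fin N → ℕ)
    (Rm : ℂ → ℂ → Fin N → Fin N → Fin N → Fin N → ℂ)
    (hcomp : ∀ u v α β γ δ, ((p α + p β + p γ + p δ : ℕ) : ZMod 2) ≠ 0 →
      Rm u v α β γ δ = 0)
    (hybe : ∀ u v w, ∀ α β γ α'' β'' γ'',
      (∑ α', ∑ β', ∑ γ',
        Rm u v α β α' β' * Rm u w α' γ α'' γ' * Rm v w β' γ' β'' γ'') =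
      (∑ α', ∑ β', ∑ γ',
        Rm v w β γ β' γ' * Rm u w α γ' α' γ'' * Rm u v α' β' α'' β''))
    (j k : Fin L) (hjk : j ≠ k) (u ξj ξk : ℂ) (α β : Fin N) :
    Rf p (Rm ξj ξk) j k *
        (∑ γ, Lmat p Rm k u ξk α γ * Lmat p Rm j u ξj γ β) =
      (∑ γ, Lmat p Rm j u ξj α γ * Lmat p Rm k u ξk γ β) *
        Rf p (Rm ξj ξk) j k := by
  have expL : Rf p (Rm ξj ξk) j k * (∑ γ, Lmat p Rm k u ξk α γ * Lmat p Rm j u ξj γ β)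
      = ∑ x : Fin N, ∑ x1 : Fin N, ∑ x2 : Fin N, ∑ x3 : Fin N, ∑ x4 : Fin N,
          ∑ x5 : Fin N, ∑ x6 : Fin N,
          ((-1 : ℂ) ^ (p x * p x1) * Rm u ξj x x1 β x2 *
              ((-1 : ℂ) ^ (p α * p x3) * Rm u ξk α x3 x x4) *
              ((-1 : ℂ) ^ (p x1 + p x5 * (p x6 + p x1)) * Rm ξj ξk x5 x6 x1 x3 *
                (-1 : ℂ) ^ ((p x6 + p x4) * (p x1 + p x2)))) •
            (E p j x5 x2 * E p k x6 x4) := by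
    rw [Rf]
    simp only [Lmat, Matrix.of_apply, Finset.sum_mul, Finset.mul_sum, Finset.smul_sum,
      smul_mul_assoc, mul_smul_comm, prod_EE p j k hjk, smul_smul, mul_ite, mul_zero,
      ite_smul, zero_smul, smul_ite, smul_zero, Finset.sum_ite_eq', Finset.mem_univ, if_true]
  have expR : (∑ γ, Lmat p Rm j u ξj α γ * Lmat p Rm k u ξk γ β) * Rf p (Rm ξj ξk) j k
      = ∑ x : Fin N, ∑ x1 : Fin N, ∑ x2 : Fin N, ∑ x3 : Fin N, ∑ x4 : Fin N,
          ∑ x5 : Fin N, ∑ x7 : Fin N,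
          ((-1 : ℂ) ^ (p x2 + p x * (p x1 + p x2)) * Rm ξj ξk x x1 x2 x3 *
              ((-1 : ℂ) ^ (p x4 * p x5) * Rm u ξk x4 x5 β x1 *
                  ((-1 : ℂ) ^ (p α * p x7) * Rm u ξj α x7 x4 x) *
                (-1 : ℂ) ^ ((p x5 + p x1) * (p x + p x2)))) •
            (E p j x7 x2 * E p k x5 x3) := by
    rw [Rf]
    simp only [Lmat, Matrix.of_apply, Finset.sum_mul, Finset.mul_sum, Finset.smul_sum,
      smul_mul_assoc, mul_smul_comm, prod_EE' p j k hjk, smul_smul, mul_ite, mul_zero,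
      ite_smul, zero_smul, smul_ite, smul_zero, Finset.sum_ite_eq', Finset.mem_univ, if_true]
    refine Finset.sum_congr rfl fun x _ => Finset.sum_congr rfl fun x1 _ =>
      Finset.sum_congr rfl fun x2 _ => Finset.sum_congr rfl fun x3 _ =>
      Finset.sum_congr rfl fun x4 _ => Finset.sum_congr rfl fun x5 _ => ?_
    rw [Finset.sum_eq_single x1]
    · simp only [eq_self_iff_true, if_true]
    · intro b _ hb
      simp only [if_neg hb, Finset.sum_const_zero]
    · intro hmem; exact absurd (Finset.mem_univ _) hmem
  rw [expL, expR]
  conv_lhs => enter [2, y0, 2, y1, 2, y2, 2, y3]; rw [Finset.sum_comm]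
  conv_lhs => enter [2, y0, 2, y1, 2, y2]; rw [Finset.sum_comm]
  conv_lhs => enter [2, y0, 2, y1]; rw [Finset.sum_comm]
  conv_lhs => enter [2, y0]; rw [Finset.sum_comm]
  conv_lhs => rw [Finset.sum_comm]
  conv_lhs => enter [2, y0, 2, y1]; rw [Finset.sum_comm]
  conv_lhs => enter [2, y0]; rw [Finset.sum_comm]
  conv_lhs => enter [2, y0, 2, y1, 2, y2, 2, y3, 2, y4]; rw [Finset.sum_comm]
  conv_lhs => enter [2, y0, 2, y1, 2, y2, 2, y3]; rw [Finset.sum_comm]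
  conv_lhs => enter [2, y0, 2, y1, 2, y2]; rw [Finset.sum_comm]
  conv_lhs => enter [2, y0, 2, y1]; rw [Finset.sum_comm]
  conv_lhs => enter [2, y0, 2, y1, 2, y2, 2, y3, 2, y4]; rw [Finset.sum_comm]
  conv_lhs => enter [2, y0, 2, y1, 2, y2, 2, y3]; rw [Finset.sum_comm]
  conv_lhs => enter [2, y0, 2, y1, 2, y2]; rw [Finset.sum_comm]
  conv_rhs => enter [2, y0, 2, y1, 2, y2, 2, y3, 2, y4]; rw [Finset.sum_comm]
  conv_rhs => enter [2, y0, 2, y1, 2, y2, 2, y3]; rw [Finset.sum_comm]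
  conv_rhs => enter [2, y0, 2, y1, 2, y2]; rw [Finset.sum_comm]
  conv_rhs => enter [2, y0, 2, y1]; rw [Finset.sum_comm]
  conv_rhs => enter [2, y0]; rw [Finset.sum_comm]
  conv_rhs => rw [Finset.sum_comm]
  conv_rhs => enter [2, y0, 2, y1]; rw [Finset.sum_comm]
  conv_rhs => enter [2, y0]; rw [Finset.sum_comm]
  conv_rhs => enter [2, y0, 2, y1, 2, y2, 2, y3, 2, y4]; rw [Finset.sum_comm]
  conv_rhs => enter [2, y0, 2, y1, 2, y2, 2, y3]; rw [Finset.sum_comm]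
  conv_rhs => enter [2, y0, 2, y1, 2, y2]; rw [Finset.sum_comm]
  conv_rhs => enter [2, y0, 2, y1]; rw [Finset.sum_comm]
  conv_rhs => enter [2, y0, 2, y1, 2, y2, 2, y3]; rw [Finset.sum_comm]
  conv_rhs => enter [2, y0, 2, y1, 2, y2]; rw [Finset.sum_comm]
  conv_rhs => enter [2, y0, 2, y1, 2, y2, 2, y3, 2, y4]; rw [Finset.sum_comm]
  conv_rhs => enter [2, y0, 2, y1, 2, y2, 2, y3]; rw [Finset.sum_comm]
  refine Finset.sum_congr rfl fun A _ => Finset.sum_congr rfl fun H _ =>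
    Finset.sum_congr rfl fun B _ => Finset.sum_congr rfl fun F _ => ?_
  simp only [← Finset.sum_smul]
  congr 1
  have hL : ∀ x x1 x3 : Fin N,
      (-1 : ℂ) ^ (p x * p x1) * Rm u ξj x x1 β H *
          ((-1 : ℂ) ^ (p α * p x3) * Rm u ξk α x3 x F) *
          ((-1 : ℂ) ^ (p x1 + p A * (p B + p x1)) * Rm ξj ξk A B x1 x3 *
            (-1 : ℂ) ^ ((p B + p F) * (p x1 + p H)))
        = (-1 : ℂ) ^ (p α * p A + p α * p B + p A * p B + p H * p B + p H * p F) *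
          (Rm ξj ξk A B x1 x3 * Rm u ξk α x3 x F * Rm u ξj x x1 β H) := by
    intro x x1 x3
    by_cases h1 : Rm u ξj x x1 β H = 0
    · rw [h1]; ring
    by_cases h2 : Rm u ξk α x3 x F = 0
    · rw [h2]; ring
    by_cases h3 : Rm ξj ξk A B x1 x3 = 0
    · rw [h3]; ring
    have c1 : ((p x + p x1 + p β + p H : ℕ) : ZMod 2) = 0 := by
      by_contra hc; exact h1 (hcomp u ξj x x1 β H hc)
    have c2 : ((p α + p x3 + p x + p F : ℕ) : ZMod 2) = 0 := by
      by_contra hc; exact h2 (hcomp u ξk α x3 x F hc)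
    have c3 : ((p A + p B + p x1 + p x3 : ℕ) : ZMod 2) = 0 := by
      by_contra hc; exact h3 (hcomp ξj ξk A B x1 x3 hc)
    have hs : (-1 : ℂ) ^ (p x * p x1 + p α * p x3 + (p x1 + p A * (p B + p x1))
          + (p B + p F) * (p x1 + p H))
        = (-1 : ℂ) ^ (p α * p A + p α * p B + p A * p B + p H * p B + p H * p F) := by
      apply neg_one_pow_congr_zmod
      push_cast at c1 c2 c3 ⊢
      exact zkeyL _ _ _ _ _ _ _ _ _ c1 c2 c3
    rw [pow_add, pow_add, pow_add] at hs
    linear_combination (Rm ξj ξk A B x1 x3 * Rm u ξk α x3 x F * Rm u ξj x x1 β H) * hs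
  have hR : ∀ g1 g2 g3 : Fin N,
      (-1 : ℂ) ^ (p H + p g2 * (p g3 + p H)) * Rm ξj ξk g2 g3 H F *
          ((-1 : ℂ) ^ (p g1 * p B) * Rm u ξk g1 B β g3 *
              ((-1 : ℂ) ^ (p α * p A) * Rm u ξj α A g1 g2) *
            (-1 : ℂ) ^ ((p B + p g3) * (p g2 + p H)))
        = (-1 : ℂ) ^ (p α * p A + p α * p B + p A * p B + p H * p B + p H * p F) *
          (Rm u ξj α A g1 g2 * Rm u ξk g1 B β g3 * Rm ξj ξk g2 g3 H F) := by
    intro g1 g2 g3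
    by_cases h1 : Rm ξj ξk g2 g3 H F = 0
    · rw [h1]; ring
    by_cases h2 : Rm u ξk g1 B β g3 = 0
    · rw [h2]; ring
    by_cases h3 : Rm u ξj α A g1 g2 = 0
    · rw [h3]; ring
    have c1 : ((p g2 + p g3 + p H + p F : ℕ) : ZMod 2) = 0 := by
      by_contra hc; exact h1 (hcomp ξj ξk g2 g3 H F hc)
    have c2 : ((p g1 + p B + p β + p g3 : ℕ) : ZMod 2) = 0 := by
      by_contra hc; exact h2 (hcomp u ξk g1 B β g3 hc)
    have c3 : ((p α + p A + p g1 + p g2 : ℕ) : ZMod 2) = 0 := by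
      by_contra hc; exact h3 (hcomp u ξj α A g1 g2 hc)
    have hs : (-1 : ℂ) ^ ((p H + p g2 * (p g3 + p H)) + p g1 * p B + p α * p A
          + (p B + p g3) * (p g2 + p H))
        = (-1 : ℂ) ^ (p α * p A + p α * p B + p A * p B + p H * p B + p H * p F) := by
      apply neg_one_pow_congr_zmod
      push_cast at c1 c2 c3 ⊢
      exact zkeyR _ _ _ _ _ _ _ _ _ c1 c2 c3
    rw [pow_add, pow_add, pow_add] at hs
    linear_combination (Rm u ξj α A g1 g2 * Rm u ξk g1 B β g3 * Rm ξj ξk g2 g3 H F) * hs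
  calc (∑ x : Fin N, ∑ x1 : Fin N, ∑ x3 : Fin N,
        (-1 : ℂ) ^ (p x * p x1) * Rm u ξj x x1 β H *
          ((-1 : ℂ) ^ (p α * p x3) * Rm u ξk α x3 x F) *
          ((-1 : ℂ) ^ (p x1 + p A * (p B + p x1)) * Rm ξj ξk A B x1 x3 *
            (-1 : ℂ) ^ ((p B + p F) * (p x1 + p H))))
      = ∑ x : Fin N, ∑ x1 : Fin N, ∑ x3 : Fin N,
          (-1 : ℂ) ^ (p α * p A + p α * p B + p A * p B + p H * p B + p H * p F) *
            (Rm ξj ξk A B x1 x3 * Rm u ξk α x3 x F * Rm u ξj x x1 β H) :=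
        Finset.sum_congr rfl fun x _ => Finset.sum_congr rfl fun x1 _ =>
          Finset.sum_congr rfl fun x3 _ => hL x x1 x3
    _ = (-1 : ℂ) ^ (p α * p A + p α * p B + p A * p B + p H * p B + p H * p F) *
          ∑ x : Fin N, ∑ x1 : Fin N, ∑ x3 : Fin N,
            Rm ξj ξk A B x1 x3 * Rm u ξk α x3 x F * Rm u ξj x x1 β H := by
        simp only [← Finset.mul_sum]
    _ = (-1 : ℂ) ^ (p α * p A + p α * p B + p A * p B + p H * p B + p H * p F) *
          ∑ x : Fin N, ∑ x1 : Fin N, ∑ x3 : Fin N,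
            Rm u ξj α A x x1 * Rm u ξk x B β x3 * Rm ξj ξk x1 x3 H F := by
        rw [← hybe u ξj ξk α A B β H F]
    _ = ∑ x : Fin N, ∑ x1 : Fin N, ∑ x3 : Fin N,
          (-1 : ℂ) ^ (p α * p A + p α * p B + p A * p B + p H * p B + p H * p F) *
            (Rm u ξj α A x x1 * Rm u ξk x B β x3 * Rm ξj ξk x1 x3 H F) := by
        simp only [Finset.mul_sum]
    _ = _ :=
        Finset.sum_congr rfl fun g1 _ => Finset.sum_congr rfl fun g2 _ =>
          Finset.sum_congr rfl fun g3 _ => (hR g1 g2 g3).symm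
end
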